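/- arXiv:2105.12498 — 2 statements merged into one kernel-verified Lean document; each statement's English description precedes it below -/
import Mathlib

section
/- Let T be an Ax-maximal consistent set of PTEL formulas and α a formula. If r = sup{s ∈ ℚ ∩ [0,1] : P_{≥s} α ∈ T} and r is rational, then P_{≥r} α ∈ T; moreover, for every rational s ∈ [0,1] with s < r one has P_{≥s} α ∈ T. -/
namespace PTEL

/-- Formulas of the probabilistic temporal epistemic logic PTEL with `m` agents
(agents are `Fin m`).  Propositional letters are `atom n` (`n : ℕ`) together with
the special letters `act a` (the letter `A_a`, "agent `a` is active"). -/
inductive Frm (m : ℕ) : Type where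
  | atom   : ℕ → Frm m
  | act    : Fin m → Frm m
  | neg    : Frm m → Frm m
  | and    : Frm m → Frm m → Frm m
  | next   : Frm m → Frm m
  | until  : Frm m → Frm m → Frm m
  | prev   : Frm m → Frm m
  | since  : Frm m → Frm m → Frm m
  | know   : Fin m → Frm m → Frm m
  | common : Frm m → Frm m
  | pge    : ℚ → Frm m → Frm m            -- P_{≥ s} α
  | page   : Fin m → ℚ → Frm m → Frm m    -- P_{a, ≥ s} α

namespace Frm

variable {m : ℕ}

/-- `α → β` defined classically as `¬(α ∧ ¬β)`. -/
def imp (α β : Frm m) : Frm m := Frm.neg (Frm.and α (Frm.neg β))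

/-- `α ∨ β` defined classically. -/
def orf (α β : Frm m) : Frm m := Frm.neg (Frm.and (Frm.neg α) (Frm.neg β))

/-- `α ↔ β`. -/
def ifff (α β : Frm m) : Frm m := Frm.and (imp α β) (imp β α)

/-- A fixed tautology `⊤`. -/
def verum : Frm m := imp (Frm.atom 0) (Frm.atom 0)

/-- `◯^n α`. -/
def nextPow : ℕ → Frm m → Frm m
  | 0, α => α
  | n + 1, α => Frm.next (nextPow n α)

/-- `●^n α`. -/
def prevPow : ℕ → Frm m → Frm m
  | 0, α => α
  | n + 1, α => Frm.prev (prevPow n α)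

/-- `⋀_{l=0}^{n-1} f l` (the empty conjunction is `⊤`). -/
def conjBelow (f : ℕ → Frm m) : ℕ → Frm m
  | 0 => verum
  | n + 1 => Frm.and (conjBelow f n) (f n)

/-- `G α = ⋀_{a ∈ Agents} K_a α` (everybody knows). -/
def ek (α : Frm m) : Frm m :=
  (List.finRange m).foldr (fun a acc => Frm.and (Frm.know a α) acc) verum

/-- `G^n α` where `G^0 α = α` and `G^{n+1} α = G (G^n α)`. -/
def ekPow : ℕ → Frm m → Frm m
  | 0, α => α
  | n + 1, α => ek (ekPow n α)

/-- `◇ α = (α → α) U α`. -/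
def sometime (α : Frm m) : Frm m := Frm.until (imp α α) α

/-- `□ α = ¬ ◇ ¬ α`. -/
def always (α : Frm m) : Frm m := Frm.neg (sometime (Frm.neg α))

/-- `P_{< s} α  =  ¬ P_{≥ s} α`. -/
def plt (s : ℚ) (α : Frm m) : Frm m := Frm.neg (Frm.pge s α)

/-- `P_{≤ s} α  =  P_{≥ 1-s} ¬α`. -/
def ple (s : ℚ) (α : Frm m) : Frm m := Frm.pge (1 - s) (Frm.neg α)

/-- `P_{a, < s} α  =  ¬ P_{a, ≥ s} α`. -/
def palt (a : Fin m) (s : ℚ) (α : Frm m) : Frm m := Frm.neg (Frm.page a s α)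

/-- `P_{a, ≤ s} α  =  P_{a, ≥ 1-s} ¬α`. -/
def pale (a : Fin m) (s : ℚ) (α : Frm m) : Frm m := Frm.page a (1 - s) (Frm.neg α)

end Frm

/-- The unary operators `K_a`, `◯`, `●` used in `k`-nested implications. -/
inductive Op (m : ℕ) : Type where
  | know : Fin m → Op m
  | next : Op m
  | prev : Op m

def Op.app {m : ℕ} : Op m → Frm m → Frm m
  | .know a, α => Frm.know a α
  | .next, α => Frm.next α
  | .prev, α => Frm.prev α

/-- The `k`-nested implication `Φ_{k,B,X}(τ)`.  Here `β0` is the innermost formula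
`β_0`, and `L = [(β_k, X_k), (β_{k-1}, X_{k-1}), …, (β_1, X_1)]` lists the remaining
formulas of `B` paired with the operators of `X`, from the outermost inwards:
`Φ_{0,(β_0),()}(τ) = β_0 → τ` and
`Φ_{k,B,X}(τ) = β_k → X_k Φ_{k-1,(β_0,…,β_{k-1}),(X_1,…,X_{k-1})}(τ)` for `k ≥ 1`. -/
def KNI {m : ℕ} (β0 : Frm m) : List (Frm m × Op m) → Frm m → Frm m
  | [], τ => Frm.imp β0 τ
  | p :: L, τ => Frm.imp p.1 (Op.app p.2 (KNI β0 L τ))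

/-- Instances of classical propositional tautologies: formulas true under every
Boolean valuation that respects `¬` and `∧`. -/
def IsTautology {m : ℕ} (φ : Frm m) : Prop :=
  ∀ v : Frm m → Bool,
    (∀ α, v (Frm.neg α) = !(v α)) →
    (∀ α β, v (Frm.and α β) = (v α && v β)) →
    v φ = true

/-- `q ∈ [0,1] ∩ ℚ`. -/
def InUnit (q : ℚ) : Prop := 0 ≤ q ∧ q ≤ 1

/-- Derivability in the axiomatic system `Ax` of PTEL.  Premises of the
necessitation rules must be theorems (derivable from `∅`); the rules
`ruleUntil`, `ruleSince`, `ruleCommon`, `ruleArch`, `ruleArchA` are the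
infinitary rules RU, RS, RC, RGA, RA formulated via `k`-nested implications. -/
inductive Deriv {m : ℕ} : Set (Frm m) → Frm m → Prop where
  -- I. propositional part
  | hyp {T : Set (Frm m)} {φ} (h : φ ∈ T) : Deriv T φ
  | tauto {T : Set (Frm m)} {φ} (h : IsTautology φ) : Deriv T φ
  | mp {T : Set (Frm m)} {φ ψ} (h1 : Deriv T (Frm.imp φ ψ)) (h2 : Deriv T φ) : Deriv T ψ
  -- II. temporal axioms and rules
  | axNextNeg {T : Set (Frm m)} (α) :
      Deriv T (Frm.ifff (Frm.neg (Frm.next α)) (Frm.next (Frm.neg α)))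
  | axNextImp {T : Set (Frm m)} (α β) :
      Deriv T (Frm.imp (Frm.next (Frm.imp α β)) (Frm.imp (Frm.next α) (Frm.next β)))
  | axUntilNext {T : Set (Frm m)} (α β) :
      Deriv T (Frm.ifff (Frm.until α β)
        (Frm.orf β (Frm.and α (Frm.next (Frm.until α β)))))
  | axUntilSometime {T : Set (Frm m)} (α β) :
      Deriv T (Frm.imp (Frm.until α β) (Frm.sometime β))
  | axPrevNeg {T : Set (Frm m)} (α) :
      Deriv T (Frm.imp (Frm.neg (Frm.prev (Frm.neg α))) (Frm.prev α))
  | axPrevImp {T : Set (Frm m)} (α β) :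
      Deriv T (Frm.imp (Frm.prev (Frm.imp α β)) (Frm.imp (Frm.prev α) (Frm.prev β)))
  | axPrevAnd {T : Set (Frm m)} (α β) :
      Deriv T (Frm.imp (Frm.and (Frm.prev α) (Frm.prev β)) (Frm.prev (Frm.and α β)))
  | axNextPrev {T : Set (Frm m)} (α) :
      Deriv T (Frm.ifff (Frm.next (Frm.prev α)) α)
  | axNextPrevC1 {T : Set (Frm m)} (α) :
      Deriv T (Frm.imp (Frm.next (Frm.prev α)) (Frm.prev (Frm.next α)))
  | axNextPrevC2 {T : Set (Frm m)} (α γ) :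
      Deriv T (Frm.imp (Frm.neg (Frm.prev (Frm.and γ (Frm.neg γ))))
        (Frm.ifff (Frm.next (Frm.prev α)) (Frm.prev (Frm.next α))))
  | axSincePrev {T : Set (Frm m)} (α β) :
      Deriv T (Frm.ifff (Frm.since α β)
        (Frm.orf β (Frm.and (Frm.neg (Frm.prev (Frm.and α (Frm.neg α))))
          (Frm.and α (Frm.prev (Frm.since α β))))))
  | axOncePrev {T : Set (Frm m)} (β) :
      Deriv T (Frm.since (Frm.imp (Frm.prev β) (Frm.prev β)) (Frm.prev β))
  | ruleNextNec {T : Set (Frm m)} {α} (h : Deriv ∅ α) : Deriv T (Frm.next α)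
  | rulePrevNec {T : Set (Frm m)} {α} (h : Deriv ∅ α) : Deriv T (Frm.prev α)
  | ruleUntil {T : Set (Frm m)} {β0 : Frm m} {L : List (Frm m × Op m)} {α β : Frm m}
      (h : ∀ i : ℕ, Deriv T (KNI β0 L (Frm.neg
        (Frm.and (Frm.conjBelow (fun l => Frm.nextPow l α) i) (Frm.nextPow i β))))) :
      Deriv T (KNI β0 L (Frm.neg (Frm.until α β)))
  | ruleSince {T : Set (Frm m)} {β0 : Frm m} {L : List (Frm m × Op m)} {α β : Frm m}
      (h : ∀ i : ℕ, Deriv T (KNI β0 L (Frm.neg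
        (Frm.and (Frm.conjBelow (fun l => Frm.prevPow l α) i)
          (Frm.and (Frm.conjBelow (fun l => Frm.neg (Frm.prevPow l (Frm.and α (Frm.neg α)))) (i + 1))
            (Frm.prevPow i β)))))) :
      Deriv T (KNI β0 L (Frm.neg (Frm.since α β)))
  -- III. epistemic axioms and rules
  | axKImp {T : Set (Frm m)} (a : Fin m) (α β) :
      Deriv T (Frm.imp (Frm.know a (Frm.imp α β)) (Frm.imp (Frm.know a α) (Frm.know a β)))
  | axKRefl {T : Set (Frm m)} (a : Fin m) (α) :
      Deriv T (Frm.imp (Frm.act a) (Frm.imp (Frm.know a α) α))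
  | axKAware {T : Set (Frm m)} (a : Fin m) :
      Deriv T (Frm.imp (Frm.act a) (Frm.know a (Frm.act a)))
  | axKDead {T : Set (Frm m)} (a : Fin m) (α) :
      Deriv T (Frm.imp (Frm.neg (Frm.act a)) (Frm.know a (Frm.and α (Frm.neg α))))
  | axKSymm {T : Set (Frm m)} (a : Fin m) (α) :
      Deriv T (Frm.imp (Frm.know a (Frm.neg α)) (Frm.know a (Frm.neg (Frm.know a α))))
  | axKTrans {T : Set (Frm m)} (a : Fin m) (α) :
      Deriv T (Frm.imp (Frm.know a α) (Frm.know a (Frm.know a α)))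
  | axCommon {T : Set (Frm m)} (α) (n : ℕ) :
      Deriv T (Frm.imp (Frm.common α) (Frm.ekPow n α))
  | ruleKNec {T : Set (Frm m)} (a : Fin m) {α} (h : Deriv ∅ α) : Deriv T (Frm.know a α)
  | ruleCommon {T : Set (Frm m)} {β0 : Frm m} {L : List (Frm m × Op m)} {α : Frm m}
      (h : ∀ i : ℕ, Deriv T (KNI β0 L (Frm.ekPow i α))) :
      Deriv T (KNI β0 L (Frm.common α))
  -- IV. probabilities on runs
  | axPge0 {T : Set (Frm m)} (α) : Deriv T (Frm.pge 0 α)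
  | axPleLt {T : Set (Frm m)} (α) {r t : ℚ} (hr : InUnit r) (ht : InUnit t) (h : r < t) :
      Deriv T (Frm.imp (Frm.ple r α) (Frm.plt t α))
  | axPltLe {T : Set (Frm m)} (α) {t : ℚ} (ht : InUnit t) :
      Deriv T (Frm.imp (Frm.plt t α) (Frm.ple t α))
  | axPAdd {T : Set (Frm m)} (α β) {r t : ℚ} (hr : InUnit r) (ht : InUnit t) :
      Deriv T (Frm.imp
        (Frm.and (Frm.pge r α) (Frm.and (Frm.pge t β) (Frm.pge 1 (Frm.neg (Frm.and α β)))))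
        (Frm.pge (min 1 (r + t)) (Frm.orf α β)))
  | axPAdd2 {T : Set (Frm m)} (α β) {r t : ℚ} (hr : InUnit r) (ht : InUnit t)
      (h : r + t ≤ 1) :
      Deriv T (Frm.imp (Frm.and (Frm.ple r α) (Frm.plt t α)) (Frm.plt (r + t) (Frm.orf α β)))
  | axPPrev {T : Set (Frm m)} (α) :
      Deriv T (Frm.pge 1 (Frm.prev (Frm.and α (Frm.neg α))))
  | rulePNec {T : Set (Frm m)} {α} (h : Deriv ∅ α) : Deriv T (Frm.pge 1 α)
  | ruleArch {T : Set (Frm m)} {β0 : Frm m} {L : List (Frm m × Op m)} {α : Frm m} {r : ℚ}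
      (hr0 : 0 < r) (hr1 : r ≤ 1)
      (h : ∀ i : ℕ, 1 / r ≤ (i : ℚ) → Deriv T (KNI β0 L (Frm.pge (r - 1 / (i : ℚ)) α))) :
      Deriv T (KNI β0 L (Frm.pge r α))
  -- V. probabilities on possible worlds
  | axPAge0 {T : Set (Frm m)} (a : Fin m) (α) : Deriv T (Frm.page a 0 α)
  | axPALeLt {T : Set (Frm m)} (a : Fin m) (α) {r t : ℚ} (hr : InUnit r) (ht : InUnit t)
      (h : r < t) :
      Deriv T (Frm.imp (Frm.pale a r α) (Frm.palt a t α))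
  | axPALtLe {T : Set (Frm m)} (a : Fin m) (α) {t : ℚ} (ht : InUnit t) :
      Deriv T (Frm.imp (Frm.palt a t α) (Frm.pale a t α))
  | axPAAdd {T : Set (Frm m)} (a : Fin m) (α β) {r t : ℚ} (hr : InUnit r) (ht : InUnit t) :
      Deriv T (Frm.imp
        (Frm.and (Frm.page a r α)
          (Frm.and (Frm.page a t β) (Frm.page a 1 (Frm.neg (Frm.and α β)))))
        (Frm.page a (min 1 (r + t)) (Frm.orf α β)))
  | axPAAdd2 {T : Set (Frm m)} (a : Fin m) (α β) {r t : ℚ} (hr : InUnit r) (ht : InUnit t)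
      (h : r + t ≤ 1) :
      Deriv T (Frm.imp (Frm.and (Frm.pale a r α) (Frm.palt a t α))
        (Frm.palt a (r + t) (Frm.orf α β)))
  | rulePANec {T : Set (Frm m)} (a : Fin m) {α} (h : Deriv ∅ α) : Deriv T (Frm.page a 1 α)
  | ruleArchA {T : Set (Frm m)} (a : Fin m) {β0 : Frm m} {L : List (Frm m × Op m)}
      {α : Frm m} {r : ℚ} (hr0 : 0 < r) (hr1 : r ≤ 1)
      (h : ∀ i : ℕ, 1 / r ≤ (i : ℚ) →
        Deriv T (KNI β0 L (Frm.page a (r - 1 / (i : ℚ)) α))) :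
      Deriv T (KNI β0 L (Frm.page a r α))

/-- A theory is inconsistent if it derives every formula. -/
def Inconsistent {m : ℕ} (T : Set (Frm m)) : Prop := ∀ φ : Frm m, Deriv T φ

def Consistent {m : ℕ} (T : Set (Frm m)) : Prop := ¬ Inconsistent T

def MaximalConsistent {m : ℕ} (T : Set (Frm m)) : Prop :=
  Consistent T ∧ ∀ S : Set (Frm m), T ⊂ S → ¬ Consistent S

/-! ### Semantics -/

/-- A run assigns to each moment the set of propositional letters true at it
(`Sum.inl n` is the letter `atom n`, `Sum.inr a` is the letter `A_a`). -/
abbrev Run (m : ℕ) : Type := ℕ → Set (ℕ ⊕ Fin m)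

/-- A finitely additive probability measure defined on an algebra of subsets of `X`. -/
structure FinAddProb (X : Type) where
  sets : Set (Set X)
  univ_mem : Set.univ ∈ sets
  compl_mem : ∀ A ∈ sets, Aᶜ ∈ sets
  union_mem : ∀ A ∈ sets, ∀ B ∈ sets, A ∪ B ∈ sets
  mu : Set X → ℝ
  mu_nonneg : ∀ A ∈ sets, 0 ≤ mu A
  mu_univ : mu Set.univ = 1
  mu_add : ∀ A ∈ sets, ∀ B ∈ sets, Disjoint A B → mu (A ∪ B) = mu A + mu B

/-- A finitely additive probability space on a nonempty subset (`carrier`) of `X`,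
with an algebra of subsets of the carrier. -/
structure SubFinAddProb (X : Type) where
  carrier : Set X
  carrier_nonempty : carrier.Nonempty
  sets : Set (Set X)
  sets_sub : ∀ A ∈ sets, A ⊆ carrier
  carrier_mem : carrier ∈ sets
  compl_mem : ∀ A ∈ sets, carrier \ A ∈ sets
  union_mem : ∀ A ∈ sets, ∀ B ∈ sets, A ∪ B ∈ sets
  mu : Set X → ℝ
  mu_nonneg : ∀ A ∈ sets, 0 ≤ mu A
  mu_carrier : mu carrier = 1
  mu_add : ∀ A ∈ sets, ∀ B ∈ sets, Disjoint A B → mu (A ∪ B) = mu A + mu B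

/-- A PTEL Kripke model. -/
structure Model (m : ℕ) where
  runs : Set (Run m)
  runs_nonempty : runs.Nonempty
  /-- epistemic accessibility relations on possible worlds (pairs run/time) -/
  acc : Fin m → (↥runs × ℕ) → (↥runs × ℕ) → Prop
  acc_symm : ∀ a w w', acc a w w' → acc a w' w
  acc_trans : ∀ a w w' w'', acc a w w' → acc a w' w'' → acc a w w''
  /-- agent `a` is inactive at `w` iff no world is accessible from `w` -/
  inactive_iff : ∀ (a : Fin m) (w : ↥runs × ℕ),
    Sum.inr a ∉ w.1.1 w.2 ↔ ∀ w', ¬ acc a w w'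
  /-- accessibility is reflexive at worlds where the agent is active -/
  acc_refl : ∀ (a : Fin m) (w : ↥runs × ℕ), Sum.inr a ∈ w.1.1 w.2 → acc a w w
  /-- the probability on runs associated to each possible world -/
  runProb : (↥runs × ℕ) → FinAddProb ↥runs
  /-- the agents' probability spaces on possible worlds -/
  agentProb : Fin m → (↥runs × ℕ) → SubFinAddProb (↥runs × ℕ)

abbrev Model.World {m : ℕ} (M : Model m) : Type := ↥M.runs × ℕ

/-- Satisfaction of a formula at a possible world of a model.  Common knowledge is
interpreted via reachability (the equivalent formulation of `(r,n) ⊨ C β`). -/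
def Sat {m : ℕ} (M : Model m) : Frm m → M.World → Prop
  | .atom n, w => Sum.inl n ∈ w.1.1 w.2
  | .act a, w => Sum.inr a ∈ w.1.1 w.2
  | .neg α, w => ¬ Sat M α w
  | .and α β, w => Sat M α w ∧ Sat M β w
  | .next α, w => Sat M α (w.1, w.2 + 1)
  | .until α β, w => ∃ j, w.2 ≤ j ∧ Sat M β (w.1, j) ∧
      ∀ k, w.2 ≤ k → k < j → Sat M α (w.1, k)
  | .prev α, w => w.2 = 0 ∨ ∃ n, w.2 = n + 1 ∧ Sat M α (w.1, n)
  | .since α β, w => ∃ j, j ≤ w.2 ∧ Sat M β (w.1, j) ∧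
      ∀ k, j < k → k ≤ w.2 → Sat M α (w.1, k)
  | .know a α, w => ∀ w', M.acc a w w' → Sat M α w'
  | .common α, w => ∀ w', Relation.ReflTransGen (fun u v => ∃ a, M.acc a u v) w w' →
      Sat M α w'
  | .pge s α, w => (s : ℝ) ≤ (M.runProb w).mu {r : ↥M.runs | Sat M α (r, 0)}
  | .page a s α, w => (s : ℝ) ≤ (M.agentProb a w).mu
      {w' : M.World | w' ∈ (M.agentProb a w).carrier ∧ Sat M α w'}

/-- A model is measurable if all definable sets of runs / of possible worlds are
measurable. -/
def Model.Measurable {m : ℕ} (M : Model m) : Prop :=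
  ∀ (β : Frm m) (w : M.World),
    {r : ↥M.runs | Sat M β (r, 0)} ∈ (M.runProb w).sets ∧
    ∀ a : Fin m,
      {w' : M.World | w' ∈ (M.agentProb a w).carrier ∧ Sat M β w'} ∈ (M.agentProb a w).sets

/-- A set of formulas is satisfiable if it holds at a possible world of some
measurable model. -/
def SatisfiableSet {m : ℕ} (T : Set (Frm m)) : Prop :=
  ∃ M : Model m, M.Measurable ∧ ∃ w : M.World, ∀ φ ∈ T, Sat M φ w

end PTEL

namespace PTEL

/-!
Below the supremum `r`, some `P_{≥t} α ∈ T` with `s < t`, and the axioms relating `P_{<}` and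
`P_{≤}` make `P_{≥}` antitone in its index, so `P_{≥s} α ∈ T` by deductive closure. If `r` is
rational, all the approximants `P_{≥ r - 1/i} α` therefore lie in `T`, and the Archimedean rule
derives `P_{≥r} α`.
-/

section

variable {m : ℕ}

theorem Deriv.cut {S T : Set (Frm m)} {ψ : Frm m} (h : Deriv S ψ)
    (hST : ∀ χ ∈ S, Deriv T χ) : Deriv T ψ := by
  induction h with
  | hyp h => exact hST _ h
  | mp _ _ ih₁ ih₂ => exact .mp (ih₁ hST) (ih₂ hST)
  | ruleUntil _ ih => exact .ruleUntil fun i => ih i hST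
  | ruleSince _ ih => exact .ruleSince fun i => ih i hST
  | ruleCommon _ ih => exact .ruleCommon fun i => ih i hST
  | ruleArch hr0 hr1 _ ih => exact .ruleArch hr0 hr1 fun i hi => ih i hi hST
  | ruleArchA a hr0 hr1 _ ih => exact .ruleArchA a hr0 hr1 fun i hi => ih i hi hST
  -- the remaining rules have no premises derived from `S`
  | _ => aesop (add 50% constructors Deriv)

theorem MaximalConsistent.mem_of_deriv {T : Set (Frm m)} (hT : MaximalConsistent T)
    {φ : Frm m} (h : Deriv T φ) : φ ∈ T := by
  by_contra hφ
  have hinc : Inconsistent (insert φ T) := not_not.mp (hT.2 _ (Set.ssubset_insert hφ))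
  refine hT.1 fun ψ => (hinc ψ).cut ?_
  rintro χ (rfl | hχ)
  exacts [h, .hyp hχ]

namespace Deriv

variable {T : Set (Frm m)} {φ ψ χ : Frm m}

theorem verum : Deriv T (Frm.verum (m := m)) :=
  .tauto fun v hneg hand => by
    simp only [Frm.verum, Frm.imp, hneg, hand]
    cases v (.atom 0) <;> rfl

theorem imp_intro (h : Deriv T ψ) : Deriv T (φ.imp ψ) :=
  .mp (.tauto fun v hneg hand => by
    simp only [Frm.imp, hneg, hand]
    cases v φ <;> cases v ψ <;> rfl) h

theorem imp_trans (h₁ : Deriv T (φ.imp ψ)) (h₂ : Deriv T (ψ.imp χ)) : Deriv T (φ.imp χ) :=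
  .mp (.mp (.tauto fun v hneg hand => by
    simp only [Frm.imp, hneg, hand]
    cases v φ <;> cases v ψ <;> cases v χ <;> rfl) h₁) h₂

theorem of_imp_neg_neg (h : Deriv T (φ.neg.imp ψ.neg)) : Deriv T (ψ.imp φ) :=
  .mp (.tauto fun v hneg hand => by
    simp only [Frm.imp, hneg, hand]
    cases v φ <;> cases v ψ <;> rfl) h

theorem pge_imp_pge (α : Frm m) {s t : ℚ} (hs : InUnit s) (ht : InUnit t) (hst : s < t) :
    Deriv T ((Frm.pge t α).imp (Frm.pge s α)) :=
  of_imp_neg_neg <| imp_trans (axPltLe α hs) (axPleLt α hs ht hst)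

theorem pge_of_forall_sub_inv {α : Frm m} {r : ℚ} (hr0 : 0 < r) (hr1 : r ≤ 1)
    (h : ∀ i : ℕ, 1 / r ≤ i → Deriv T (Frm.pge (r - 1 / i) α)) : Deriv T (Frm.pge r α) :=
  .mp (ruleArch (β0 := .verum) (L := []) hr0 hr1 fun i hi => imp_intro (h i hi)) verum

end Deriv

namespace MaximalConsistent

variable {T : Set (Frm m)}

theorem pge_zero_mem (hT : MaximalConsistent T) (α : Frm m) : Frm.pge 0 α ∈ T :=
  hT.mem_of_deriv (.axPge0 α)

theorem pge_mem_of_le (hT : MaximalConsistent T) (α : Frm m) {s t : ℚ} (hs : InUnit s)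
    (ht : InUnit t) (hst : s ≤ t) (h : Frm.pge t α ∈ T) : Frm.pge s α ∈ T := by
  rcases hst.lt_or_eq with hst | rfl
  exacts [hT.mem_of_deriv (.mp (.pge_imp_pge α hs ht hst) (.hyp h)), h]

theorem pge_mem_of_forall_lt (hT : MaximalConsistent T) (α : Frm m) {q : ℚ} (hq : InUnit q)
    (h : ∀ s : ℚ, InUnit s → s < q → Frm.pge s α ∈ T) : Frm.pge q α ∈ T := by
  rcases hq.1.lt_or_eq with hq0 | rfl
  · refine hT.mem_of_deriv <| .pge_of_forall_sub_inv hq0 hq.2 fun i hi => .hyp ?_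
    have hi0 : (0 : ℚ) < i := (one_div_pos.mpr hq0).trans_le hi
    have hε : 0 < 1 / (i : ℚ) := one_div_pos.mpr hi0
    have hεq : 1 / (i : ℚ) ≤ q := (one_div_le hi0 hq0).mpr hi
    exact h _ ⟨by linarith, by linarith [hq.2]⟩ (by linarith)
  · exact hT.pge_zero_mem α

end MaximalConsistent

end

/-- If `T` is maximal consistent and `r = sup {s ∈ ℚ ∩ [0,1] : P_{≥s} α ∈ T}`,
then: if `r` is rational then `P_{≥r} α ∈ T`, and for every rational
`s ∈ [0,1]` with `s < r`, `P_{≥s} α ∈ T`. -/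
theorem sup_prob_in_mcs {m : ℕ} (T : Set (Frm m)) (hT : MaximalConsistent T)
    (α : Frm m) (r : ℝ)
    (hr : r = sSup ((fun s : ℚ => (s : ℝ)) '' {s : ℚ | InUnit s ∧ Frm.pge s α ∈ T})) :
    (∀ q : ℚ, (q : ℝ) = r → Frm.pge q α ∈ T) ∧
    (∀ s : ℚ, InUnit s → (s : ℝ) < r → Frm.pge s α ∈ T) := by
  set S := (fun s : ℚ => (s : ℝ)) '' {s : ℚ | InUnit s ∧ Frm.pge s α ∈ T}
  have h0 : (0 : ℝ) ∈ S := ⟨0, ⟨⟨le_rfl, zero_le_one⟩, hT.pge_zero_mem α⟩, Rat.cast_zero⟩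
  have hle1 : ∀ x ∈ S, x ≤ 1 := by
    rintro _ ⟨t, ⟨⟨-, ht⟩, -⟩, rfl⟩
    show (t : ℝ) ≤ 1
    exact_mod_cast ht
  have below : ∀ s : ℚ, InUnit s → (s : ℝ) < r → Frm.pge s α ∈ T := by
    intro s hs hsr
    obtain ⟨_, ⟨t, ⟨ht, htT⟩, rfl⟩, hst⟩ := exists_lt_of_lt_csSup ⟨0, h0⟩ (hr ▸ hsr)
    exact hT.pge_mem_of_le α hs ht (Rat.cast_le.mp hst.le) htT
  refine ⟨fun q hq => hT.pge_mem_of_forall_lt α ⟨?_, ?_⟩ fun s hs hsq => below s hs ?_, below⟩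
  · exact_mod_cast hq ▸ hr ▸ le_csSup ⟨1, hle1⟩ h0
  · exact_mod_cast hq ▸ hr ▸ csSup_le ⟨0, h0⟩ hle1
  · exact hq ▸ Rat.cast_lt.mpr hsq

end PTEL
end

section
/- If T is an Ax-maximal consistent set of PTEL formulas, then the set T^{−◯} = {α : ◯α ∈ T} is also Ax-maximal consistent. -/
/-!
A derivation from `{α | ◯α ∈ T}` can be pushed under `◯` into a derivation from `T`:
`◯` commutes with modus ponens by the axiom `◯(α → β) → (◯α → ◯β)`, theorems are
necessitated, and the infinitary rules are stated for arbitrary `k`-nested implications, so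
an outer `◯` becomes one more layer `⊤ → ◯ …` of the nesting. Hence an inconsistency of
`T^{-◯}` would make both `◯p` and `◯¬p`, i.e. `¬◯p`, derivable from `T`. For maximality,
`T` contains `◯β` or `¬◯β ↔ ◯¬β`, so `T^{-◯}` contains `β` or `¬β`; negation-completeness of
`T` needs the deduction theorem, which is proved by pushing derivations under `α → ·` in the
same way.
-/

namespace PTEL

variable {m : ℕ}

section Tautologies

variable (a b c : Frm m)

lemma isTautology_imp_self : IsTautology (Frm.imp a a) := by
  intro v hn ha; simp only [Frm.imp, hn, ha]; cases v a <;> rfl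

lemma isTautology_imp_imp_self : IsTautology (Frm.imp a (Frm.imp b a)) := by
  intro v hn ha; simp only [Frm.imp, hn, ha]; cases v a <;> cases v b <;> rfl

lemma isTautology_imp_distrib :
    IsTautology (Frm.imp (Frm.imp a (Frm.imp b c)) (Frm.imp (Frm.imp a b) (Frm.imp a c))) := by
  intro v hn ha; simp only [Frm.imp, hn, ha]; cases v a <;> cases v b <;> cases v c <;> rfl

lemma isTautology_curry :
    IsTautology (Frm.imp (Frm.imp (Frm.and a b) c) (Frm.imp a (Frm.imp b c))) := by
  intro v hn ha; simp only [Frm.imp, hn, ha]; cases v a <;> cases v b <;> cases v c <;> rfl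

lemma isTautology_uncurry :
    IsTautology (Frm.imp (Frm.imp a (Frm.imp b c)) (Frm.imp (Frm.and a b) c)) := by
  intro v hn ha; simp only [Frm.imp, hn, ha]; cases v a <;> cases v b <;> cases v c <;> rfl

lemma isTautology_imp_neg_imp : IsTautology (Frm.imp a (Frm.imp (Frm.neg a) b)) := by
  intro v hn ha; simp only [Frm.imp, hn, ha]; cases v a <;> cases v b <;> rfl

lemma isTautology_by_cases :
    IsTautology (Frm.imp (Frm.imp a b) (Frm.imp (Frm.imp (Frm.neg a) b) b)) := by
  intro v hn ha; simp only [Frm.imp, hn, ha]; cases v a <;> cases v b <;> rfl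

lemma isTautology_and_left : IsTautology (Frm.imp (Frm.and a b) a) := by
  intro v hn ha; simp only [Frm.imp, hn, ha]; cases v a <;> cases v b <;> rfl

lemma isTautology_and_right : IsTautology (Frm.imp (Frm.and a b) b) := by
  intro v hn ha; simp only [Frm.imp, hn, ha]; cases v a <;> cases v b <;> rfl

lemma isTautology_verum : IsTautology (Frm.verum (m := m)) := by
  intro v hn ha; simp [Frm.verum, Frm.imp, hn, ha]

end Tautologies

namespace Deriv

variable {T : Set (Frm m)} {a b c : Frm m}

lemma imp_of_deriv (h : Deriv T b) : Deriv T (Frm.imp a b) :=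
  .mp (.tauto (isTautology_imp_imp_self _ _)) h

lemma imp_mp (hab : Deriv T (Frm.imp a (Frm.imp b c))) (hb : Deriv T (Frm.imp a b)) :
    Deriv T (Frm.imp a c) :=
  .mp (.mp (.tauto (isTautology_imp_distrib _ _ _)) hab) hb

lemma imp_imp_iff_and_imp :
    Deriv T (Frm.imp a (Frm.imp b c)) ↔ Deriv T (Frm.imp (Frm.and a b) c) :=
  ⟨.mp (.tauto (isTautology_uncurry _ _ _)), .mp (.tauto (isTautology_curry _ _ _))⟩

lemma verum_imp_iff : Deriv T (Frm.imp Frm.verum a) ↔ Deriv T a :=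
  ⟨fun h => .mp h (.tauto isTautology_verum), imp_of_deriv⟩

lemma and_left (h : Deriv T (Frm.and a b)) : Deriv T a :=
  .mp (.tauto (isTautology_and_left _ _)) h

lemma and_right (h : Deriv T (Frm.and a b)) : Deriv T b :=
  .mp (.tauto (isTautology_and_right _ _)) h

-- The infinitary rules pass through `F` because each of them concludes a `k`-nested
-- implication from `k`-nested implications with the same prefix, and `hKNI` absorbs `F`
-- into that prefix.
theorem map (F : Frm m → Frm m)
    (hvalid : ∀ ψ, (∀ U, Deriv U ψ) → Deriv T (F ψ))
    (hmp : ∀ φ ψ, Deriv T (F (Frm.imp φ ψ)) → Deriv T (F φ) → Deriv T (F ψ))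
    (hKNI : ∀ β0 L, ∃ β0' L', ∀ τ, Deriv T (F (KNI β0 L τ)) ↔ Deriv T (KNI β0' L' τ))
    {S : Set (Frm m)} {φ : Frm m} (h : Deriv S φ) (hS : ∀ α ∈ S, Deriv T (F α)) :
    Deriv T (F φ) := by
  induction h with
  | hyp h => exact hS _ h
  | mp _ _ ih₁ ih₂ => exact hmp _ _ (ih₁ hS) (ih₂ hS)
  | @ruleUntil _ β0 L _ _ _ ih =>
    obtain ⟨β0', L', hL⟩ := hKNI β0 L
    exact (hL _).2 (.ruleUntil fun i => (hL _).1 (ih i hS))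
  | @ruleSince _ β0 L _ _ _ ih =>
    obtain ⟨β0', L', hL⟩ := hKNI β0 L
    exact (hL _).2 (.ruleSince fun i => (hL _).1 (ih i hS))
  | @ruleCommon _ β0 L _ _ ih =>
    obtain ⟨β0', L', hL⟩ := hKNI β0 L
    exact (hL _).2 (.ruleCommon fun i => (hL _).1 (ih i hS))
  | @ruleArch _ β0 L _ _ hr0 hr1 _ ih =>
    obtain ⟨β0', L', hL⟩ := hKNI β0 L
    exact (hL _).2 (.ruleArch hr0 hr1 fun i hi => (hL _).1 (ih i hi hS))
  | @ruleArchA _ a β0 L _ _ hr0 hr1 _ ih =>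
    obtain ⟨β0', L', hL⟩ := hKNI β0 L
    exact (hL _).2 (.ruleArchA a hr0 hr1 fun i hi => (hL _).1 (ih i hi hS))
  | tauto h => exact hvalid _ fun _ => .tauto h
  | axNextNeg α => exact hvalid _ fun _ => .axNextNeg α
  | axNextImp α β => exact hvalid _ fun _ => .axNextImp α β
  | axUntilNext α β => exact hvalid _ fun _ => .axUntilNext α β
  | axUntilSometime α β => exact hvalid _ fun _ => .axUntilSometime α β
  | axPrevNeg α => exact hvalid _ fun _ => .axPrevNeg α
  | axPrevImp α β => exact hvalid _ fun _ => .axPrevImp α β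
  | axPrevAnd α β => exact hvalid _ fun _ => .axPrevAnd α β
  | axNextPrev α => exact hvalid _ fun _ => .axNextPrev α
  | axNextPrevC1 α => exact hvalid _ fun _ => .axNextPrevC1 α
  | axNextPrevC2 α γ => exact hvalid _ fun _ => .axNextPrevC2 α γ
  | axSincePrev α β => exact hvalid _ fun _ => .axSincePrev α β
  | axOncePrev β => exact hvalid _ fun _ => .axOncePrev β
  | ruleNextNec h => exact hvalid _ fun _ => .ruleNextNec h
  | rulePrevNec h => exact hvalid _ fun _ => .rulePrevNec h
  | axKImp a α β => exact hvalid _ fun _ => .axKImp a α β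
  | axKRefl a α => exact hvalid _ fun _ => .axKRefl a α
  | axKAware a => exact hvalid _ fun _ => .axKAware a
  | axKDead a α => exact hvalid _ fun _ => .axKDead a α
  | axKSymm a α => exact hvalid _ fun _ => .axKSymm a α
  | axKTrans a α => exact hvalid _ fun _ => .axKTrans a α
  | axCommon α n => exact hvalid _ fun _ => .axCommon α n
  | ruleKNec a h => exact hvalid _ fun _ => .ruleKNec a h
  | axPge0 α => exact hvalid _ fun _ => .axPge0 α
  | axPleLt α hr ht h => exact hvalid _ fun _ => .axPleLt α hr ht h
  | axPltLe α ht => exact hvalid _ fun _ => .axPltLe α ht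
  | axPAdd α β hr ht => exact hvalid _ fun _ => .axPAdd α β hr ht
  | axPAdd2 α β hr ht h => exact hvalid _ fun _ => .axPAdd2 α β hr ht h
  | axPPrev α => exact hvalid _ fun _ => .axPPrev α
  | rulePNec h => exact hvalid _ fun _ => .rulePNec h
  | axPAge0 a α => exact hvalid _ fun _ => .axPAge0 a α
  | axPALeLt a α hr ht h => exact hvalid _ fun _ => .axPALeLt a α hr ht h
  | axPALtLe a α ht => exact hvalid _ fun _ => .axPALtLe a α ht
  | axPAAdd a α β hr ht => exact hvalid _ fun _ => .axPAAdd a α β hr ht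
  | axPAAdd2 a α β hr ht h => exact hvalid _ fun _ => .axPAAdd2 a α β hr ht h
  | rulePANec a h => exact hvalid _ fun _ => .rulePANec a h

theorem imp_of_insert (h : Deriv (insert a T) b) : Deriv T (Frm.imp a b) := by
  refine map (Frm.imp a) (fun _ hψ => imp_of_deriv (hψ T)) (fun _ _ => imp_mp) ?_ h ?_
  · intro β0 L
    cases L with
    | nil => exact ⟨Frm.and a β0, [], fun _ => imp_imp_iff_and_imp⟩
    | cons p L => exact ⟨β0, (Frm.and a p.1, p.2) :: L, fun _ => imp_imp_iff_and_imp⟩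
  · rintro α (rfl | hα)
    · exact .tauto (isTautology_imp_self α)
    · exact imp_of_deriv (.hyp hα)

theorem next_of_forall {S : Set (Frm m)} (h : Deriv S a)
    (hS : ∀ α ∈ S, Deriv T (Frm.next α)) : Deriv T (Frm.next a) :=
  map Frm.next (fun _ hψ => .ruleNextNec (hψ ∅)) (fun _ _ => .mp ∘ .mp (.axNextImp _ _))
    (fun β0 L => ⟨β0, (Frm.verum, Op.next) :: L, fun _ => verum_imp_iff.symm⟩) h hS

lemma neg_next (h : Deriv T (Frm.next (Frm.neg a))) : Deriv T (Frm.neg (Frm.next a)) :=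
  .mp (axNextNeg a).and_right h

lemma next_neg (h : Deriv T (Frm.neg (Frm.next a))) : Deriv T (Frm.next (Frm.neg a)) :=
  .mp (axNextNeg a).and_left h

end Deriv

lemma inconsistent_of_deriv_of_deriv_neg {T : Set (Frm m)} {a : Frm m} (h : Deriv T a)
    (hn : Deriv T (Frm.neg a)) : Inconsistent T :=
  fun _ => .mp (.mp (.tauto (isTautology_imp_neg_imp _ _)) h) hn

namespace MaximalConsistent

variable {T : Set (Frm m)}

theorem mem_or_neg_mem (hT : MaximalConsistent T) (a : Frm m) : a ∈ T ∨ Frm.neg a ∈ T := by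
  by_contra! ⟨ha, hna⟩
  have hinc : Inconsistent (insert a T) := not_not.mp (hT.2 _ (Set.ssubset_insert ha))
  have hninc : Inconsistent (insert (Frm.neg a) T) := not_not.mp (hT.2 _ (Set.ssubset_insert hna))
  exact hT.1 fun b => .mp (.mp (.tauto (isTautology_by_cases a b))
    (hinc b).imp_of_insert) (hninc b).imp_of_insert

theorem mem_of_deriv_s16 (hT : MaximalConsistent T) {a : Frm m} (h : Deriv T a) : a ∈ T :=
  (hT.mem_or_neg_mem a).resolve_right fun hna =>
    hT.1 (inconsistent_of_deriv_of_deriv_neg h (.hyp hna))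

end MaximalConsistent

/-- If `T` is maximal consistent, then so is `T^{-◯} = {α : ◯α ∈ T}`. -/
theorem mcs_unnext {m : ℕ} (T : Set (Frm m)) (hT : MaximalConsistent T) :
    MaximalConsistent {α : Frm m | Frm.next α ∈ T} := by
  refine ⟨fun hinc => hT.1 ?_, fun S hS hS_cons => ?_⟩
  · have hp := (hinc (Frm.atom 0)).next_of_forall fun _ hα => .hyp hα
    have hnp := (hinc (Frm.neg (Frm.atom 0))).next_of_forall fun _ hα => .hyp hα
    exact inconsistent_of_deriv_of_deriv_neg hp hnp.neg_next
  · obtain ⟨β, hβS, hβ⟩ := Set.exists_of_ssubset hS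
    have hnβ : Frm.next (Frm.neg β) ∈ T :=
      hT.mem_of_deriv_s16 (Deriv.hyp ((hT.mem_or_neg_mem _).resolve_left hβ)).next_neg
    exact hS_cons (inconsistent_of_deriv_of_deriv_neg (.hyp hβS) (.hyp (hS.subset hnβ)))

end PTEL
end
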